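/- arXiv:2212.00751 — 2 statements merged into one kernel-verified Lean document; each statement's English description precedes it below -/
import Mathlib

section
/- Let p ∈ (0,1] and let L be the limit of the sequence p_1 = 1 − p, p_{i+1} = p·p_i² + (1 − p). Then L = min(1, 1/p − 1). In particular, if p > 1/2 then L < 1. -/
theorem stmt1 (p : ℝ) (hp : p ∈ Set.Ioc (0:ℝ) 1) (f : ℕ → ℝ)
    (hf0 : f 0 = 1 - p) (hfs : ∀ n, f (n+1) = p * (f n)^2 + (1 - p)) (L : ℝ)
    (hL : Filter.Tendsto f Filter.atTop (nhds L)) :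
    L = min 1 (1/p - 1) ∧ (1/2 < p → L < 1) := by
  obtain ⟨hp0, hp1⟩ := hp
  set m : ℝ := min 1 ((1 - p) / p) with hm
  have hmin_eq : min 1 (1/p - 1) = m := by
    rw [hm]; congr 1; field_simp
  -- fixed point equation
  have h1 : Filter.Tendsto (fun n => f (n+1)) Filter.atTop (nhds L) :=
    hL.comp (Filter.tendsto_add_atTop_nat 1)
  have h2 : Filter.Tendsto (fun n => p * (f n)^2 + (1 - p)) Filter.atTop
      (nhds (p * L^2 + (1 - p))) :=
    ((hL.pow 2).const_mul p).add tendsto_const_nhds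
  have hroot : L = p * L^2 + (1 - p) := by
    refine tendsto_nhds_unique h1 ?_
    simpa only [hfs] using h2
  have hcases : L = 1 ∨ L = (1 - p) / p := by
    have hfact : (L - 1) * (p * L - (1 - p)) = 0 := by nlinarith [hroot]
    rcases mul_eq_zero.1 hfact with h | h
    · left; linarith
    · right; field_simp; linarith
  -- m is a fixed point and bounds f
  have hm0 : 0 ≤ m := by
    apply le_min; · norm_num
    · exact div_nonneg (by linarith) hp0.le
  have hmfix : p * m^2 + (1 - p) = m := by
    rcases min_cases 1 ((1 - p) / p) with ⟨h, _⟩ | ⟨h, _⟩ <;> rw [hm, h]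
    · ring
    · field_simp; ring
  have hbound : ∀ n, 0 ≤ f n ∧ f n ≤ m := by
    intro n
    induction n with
    | zero =>
      constructor
      · rw [hf0]; linarith
      · rw [hf0]
        apply le_min
        · linarith
        · rw [le_div_iff₀ hp0]; nlinarith
    | succ k ih =>
      obtain ⟨ih0, ih1⟩ := ih
      constructor
      · rw [hfs]; nlinarith
      · rw [hfs, ← hmfix]
        have : (f k)^2 ≤ m^2 := by nlinarith
        nlinarith
  have hLm : L ≤ m :=
    le_of_tendsto' hL fun n => (hbound n).2
  have hLeq : L = m := by
    rcases hcases with h | h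
    · have : 1 ≤ m := h ▸ hLm
      have : m ≤ 1 := min_le_left _ _
      linarith [h ▸ hLm, min_le_left 1 ((1-p)/p)]
    · have h1 : m ≤ (1 - p) / p := min_le_right _ _
      linarith [h ▸ hLm]
  refine ⟨hmin_eq ▸ hLeq, fun hhalf => ?_⟩
  rw [hLeq]
  have : (1 - p) / p < 1 := by
    rw [div_lt_one hp0]; linarith
  calc m ≤ (1 - p) / p := min_le_right _ _
    _ < 1 := this
end

section
/- Let p ∈ [0,1) and q₁, …, q_k ≥ 0 with ∑ q_i ≤ 1 and p·∑ q_i < 1. Then the inclusion–exclusion sum ∑_{I ⊆ {1,…,k}} (−1)^{|I|} · (1−p)/(1 − p·∑_{i ∉ I} q_i) is nonnegative. -/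
/-!
Expand each `(1 - p) / (1 - p s_I)`, where `s_I = ∑_{i ∉ I} q_i`, as a geometric series: the
coefficient of `p ^ n` is `(1 - p) ∑_I (-1)^|I| s_I ^ n`. Writing `s_I ^ n` as a sum over words
`f : Fin n → ι` avoiding `I` and summing over `I` first, inclusion–exclusion cancels every word
that misses a letter, so the coefficient is `(1 - p)` times the sum of `∏ j, q (f j)` over
surjective words, which is nonnegative.
-/

open Finset

theorem sum_powerset_neg_one_pow_card_eq_ite {α R : Type*} [DecidableEq α] [CommRing R]
    (s : Finset α) : ∑ I ∈ s.powerset, (-1 : R) ^ #I = if s = ∅ then 1 else 0 := by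
  have := congrArg (Int.cast : ℤ → R) (sum_powerset_neg_one_pow_card (x := s))
  push_cast at this
  exact this

section

variable {ι R : Type*} [Fintype ι] [DecidableEq ι] [CommRing R]

theorem sum_ite_subset_neg_one_pow_card (s : Finset ι) :
    ∑ I : Finset ι, (if I ⊆ s then (-1 : R) ^ #I else 0) = if s = ∅ then 1 else 0 := by
  rw [← sum_filter, filter_subset_univ, sum_powerset_neg_one_pow_card_eq_ite]

theorem sum_compl_pow_eq_sum_ite_subset (q : ι → R) (n : ℕ) (I : Finset ι) :
    (∑ i ∈ Iᶜ, q i) ^ n =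
      ∑ f : Fin n → ι, if I ⊆ (univ.image f)ᶜ then ∏ j, q (f j) else 0 := by
  rw [sum_pow', ← sum_filter]
  congr 1
  ext f
  simp only [Fintype.mem_piFinset, mem_filter, mem_compl, subset_iff, mem_image, mem_univ,
    true_and, not_exists]
  exact ⟨fun h x hx j hj ↦ h j (hj ▸ hx), fun h j hj ↦ h hj j rfl⟩

theorem sum_neg_one_pow_card_mul_sum_compl_pow (q : ι → R) (n : ℕ) :
    ∑ I : Finset ι, (-1) ^ #I * (∑ i ∈ Iᶜ, q i) ^ n =
      ∑ f : Fin n → ι with Function.Surjective f, ∏ j, q (f j) := by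
  simp_rw [sum_compl_pow_eq_sum_ite_subset, mul_sum]
  rw [sum_comm, sum_filter]
  refine sum_congr rfl fun f _ ↦ ?_
  have hswap (I : Finset ι) :
      (-1 : R) ^ #I * (if I ⊆ (univ.image f)ᶜ then ∏ j, q (f j) else 0) =
        (if I ⊆ (univ.image f)ᶜ then (-1) ^ #I else 0) * ∏ j, q (f j) := by
    split_ifs <;> simp
  simp_rw [hswap, ← sum_mul, sum_ite_subset_neg_one_pow_card, compl_eq_empty_iff,
    eq_univ_iff_forall, mem_image, mem_univ, true_and, ite_zero_mul, one_mul]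
  congr 1

end

theorem stmt4_general (k : ℕ) (p : ℝ) (hp : p ∈ Set.Ico (0:ℝ) 1) (q : Fin k → ℝ)
    (hq : ∀ i, 0 ≤ q i) (hpq : p * ∑ i, q i < 1) :
    0 ≤ ∑ I ∈ (Finset.univ : Finset (Fin k)).powerset,
      (-1 : ℝ) ^ I.card * (1 - p) / (1 - p * ∑ i ∈ Iᶜ, q i) := by
  obtain ⟨hp0, hp1⟩ := hp
  have hgeom (I : Finset (Fin k)) :
      HasSum (fun n ↦ (1 - p) * p ^ n * ((-1) ^ #I * (∑ i ∈ Iᶜ, q i) ^ n))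
        ((-1) ^ #I * (1 - p) / (1 - p * ∑ i ∈ Iᶜ, q i)) := by
    have hs0 : 0 ≤ p * ∑ i ∈ Iᶜ, q i := mul_nonneg hp0 (sum_nonneg fun i _ ↦ hq i)
    have hs1 : p * ∑ i ∈ Iᶜ, q i < 1 :=
      hpq.trans_le' <| mul_le_mul_of_nonneg_left (sum_le_univ_sum_of_nonneg hq) hp0
    rw [div_eq_mul_inv]
    exact ((hasSum_geometric_of_lt_one hs0 hs1).mul_left _).congr_fun fun n ↦ by ring
  refine (hasSum_sum fun I _ ↦ hgeom I).nonneg fun n ↦ ?_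
  rw [← mul_sum, powerset_univ, sum_neg_one_pow_card_mul_sum_compl_pow]
  exact mul_nonneg (mul_nonneg (sub_nonneg.2 hp1.le) (pow_nonneg hp0 n))
    (sum_nonneg fun f _ ↦ prod_nonneg fun j _ ↦ hq _)

theorem stmt4 (k : ℕ) (p : ℝ) (hp : p ∈ Set.Ico (0:ℝ) 1) (q : Fin k → ℝ)
    (hq : ∀ i, 0 ≤ q i) (hsum : ∑ i, q i ≤ 1) (hpq : p * ∑ i, q i < 1) :
    0 ≤ ∑ I ∈ (Finset.univ : Finset (Fin k)).powerset,
      (-1 : ℝ) ^ I.card * (1 - p) / (1 - p * ∑ i ∈ Iᶜ, q i) :=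
  stmt4_general k p hp q hq hpq
end
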